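/- Let π : Lit_A → ℕ[X,X̄] be a model-compatible interpretation and let φ be a first-order sentence over 𝒱. Then φ is Mod_π-valid (i.e., 𝔄 ⊨ φ for every structure 𝔄 with universe A compatible with π) if and only if π⟦¬φ⟧ = 0. -/

import Mathlib

/-- A finite relational vocabulary: a type of relation symbols with arities. -/
structure Vocab : Type 1 where
  Rel : Type
  arity : Rel → ℕ

/-- First-order formulas over a relational vocabulary `𝒱` (with equality),
with variables from `Vars`.  Negated atoms are included as primitive literals. -/
inductive Formula (𝒱 : Vocab) (Vars : Type) : Type where
  | rel    : (R : 𝒱.Rel) → (Fin (𝒱.arity R) → Vars) → Formula 𝒱 Vars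
  | nrel   : (R : 𝒱.Rel) → (Fin (𝒱.arity R) → Vars) → Formula 𝒱 Vars
  | equal  : Vars → Vars → Formula 𝒱 Vars
  | nequal : Vars → Vars → Formula 𝒱 Vars
  | and    : Formula 𝒱 Vars → Formula 𝒱 Vars → Formula 𝒱 Vars
  | or     : Formula 𝒱 Vars → Formula 𝒱 Vars → Formula 𝒱 Vars
  | all    : Vars → Formula 𝒱 Vars → Formula 𝒱 Vars
  | ex     : Vars → Formula 𝒱 Vars → Formula 𝒱 Vars
  | not    : Formula 𝒱 Vars → Formula 𝒱 Vars

/-- A ground literal over vocabulary `𝒱` and universe `A`: a positive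
(`pos = true`) or negated (`pos = false`) ground atom `R(ā)`. -/
structure Lit (𝒱 : Vocab) (A : Type) where
  pos : Bool
  R : 𝒱.Rel
  args : Fin (𝒱.arity R) → A

/-- Negation of a literal (the negation of a literal is again a literal). -/
def Lit.neg {𝒱 : Vocab} {A : Type} (L : Lit 𝒱 A) : Lit 𝒱 A := ⟨!L.pos, L.R, L.args⟩

namespace Formula

variable {𝒱 : Vocab} {Vars : Type}

/-- Size of a formula (used for termination of the semiring semantics). -/
def size : Formula 𝒱 Vars → ℕ
  | rel _ _ => 1
  | nrel _ _ => 1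
  | equal _ _ => 1
  | nequal _ _ => 1
  | and φ ψ => φ.size + ψ.size + 1
  | or φ ψ => φ.size + ψ.size + 1
  | all _ φ => φ.size + 1
  | ex _ φ => φ.size + 1
  | not φ => φ.size + 1

mutual
/-- Negation normal form of a formula. -/
def nnf : Formula 𝒱 Vars → Formula 𝒱 Vars
  | rel R v => rel R v
  | nrel R v => nrel R v
  | equal x y => equal x y
  | nequal x y => nequal x y
  | and φ ψ => and φ.nnf ψ.nnf
  | or φ ψ => or φ.nnf ψ.nnf
  | all x φ => all x φ.nnf
  | ex x φ => ex x φ.nnf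
  | not φ => nnfNeg φ

/-- Negation normal form of the negation of a formula: `nnfNeg φ = nnf (¬φ)`. -/
def nnfNeg : Formula 𝒱 Vars → Formula 𝒱 Vars
  | rel R v => nrel R v
  | nrel R v => rel R v
  | equal x y => nequal x y
  | nequal x y => equal x y
  | and φ ψ => or (nnfNeg φ) (nnfNeg ψ)
  | or φ ψ => and (nnfNeg φ) (nnfNeg ψ)
  | all x φ => ex x (nnfNeg φ)
  | ex x φ => all x (nnfNeg φ)
  | not φ => nnf φ
end

theorem size_nnf_le (φ : Formula 𝒱 Vars) : φ.nnf.size ≤ φ.size ∧ (nnfNeg φ).size ≤ φ.size := by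
  induction φ <;> simp_all [nnf, nnfNeg, size] <;> omega

/-- Free variables of a formula. -/
def FV [DecidableEq Vars] : Formula 𝒱 Vars → Finset Vars
  | rel _ v => Finset.image v Finset.univ
  | nrel _ v => Finset.image v Finset.univ
  | equal x y => {x, y}
  | nequal x y => {x, y}
  | and φ ψ => φ.FV ∪ ψ.FV
  | or φ ψ => φ.FV ∪ ψ.FV
  | all x φ => φ.FV.erase x
  | ex x φ => φ.FV.erase x
  | not φ => φ.FV

end Formula

section Semantics

variable {𝒱 : Vocab} {Vars A K : Type} [DecidableEq Vars] [Fintype A] [DecidableEq A]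
  [CommSemiring K]

/-- The extension of a `K`-interpretation `π : Lit 𝒱 A → K` to first-order formulas,
relative to a valuation `ν : Vars → A`:  `eval π φ ν = π⟦φ⟧ν`. -/
def eval (π : Lit 𝒱 A → K) : Formula 𝒱 Vars → (Vars → A) → K
  | .rel R v, ν => π ⟨true, R, fun i => ν (v i)⟩
  | .nrel R v, ν => π ⟨false, R, fun i => ν (v i)⟩
  | .equal x y, ν => if ν x = ν y then 1 else 0
  | .nequal x y, ν => if ν x ≠ ν y then 1 else 0
  | .and φ ψ, ν => eval π φ ν * eval π ψ ν
  | .or φ ψ, ν => eval π φ ν + eval π ψ ν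
  | .all x φ, ν => ∏ a : A, eval π φ (Function.update ν x a)
  | .ex x φ, ν => ∑ a : A, eval π φ (Function.update ν x a)
  | .not φ, ν => eval π (Formula.nnfNeg φ) ν
termination_by φ _ => φ.size
decreasing_by
  all_goals simp [Formula.size]
  all_goals first
    | omega
    | exact Nat.lt_succ_of_le (Formula.size_nnf_le _).2
    | exact (Formula.size_nnf_le _).2

end Semantics

/-- A `𝒱`-structure with universe `A`: an interpretation of each relation symbol. -/
def Struc (𝒱 : Vocab) (A : Type) := (R : 𝒱.Rel) → (Fin (𝒱.arity R) → A) → Prop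

/-- Standard (Tarski) satisfaction of a literal in a structure. -/
def Struc.SatLit {𝒱 : Vocab} {A : Type} (𝔄 : Struc 𝒱 A) (L : Lit 𝒱 A) : Prop :=
  if L.pos then 𝔄 L.R L.args else ¬ 𝔄 L.R L.args

section Sat

variable {𝒱 : Vocab} {Vars A : Type} [DecidableEq Vars]

/-- Standard (Tarski) satisfaction relation `𝔄 ⊨ φ[ν]`. -/
def Sat (𝔄 : Struc 𝒱 A) : Formula 𝒱 Vars → (Vars → A) → Prop
  | .rel R v, ν => 𝔄 R (fun i => ν (v i))
  | .nrel R v, ν => ¬ 𝔄 R (fun i => ν (v i))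
  | .equal x y, ν => ν x = ν y
  | .nequal x y, ν => ν x ≠ ν y
  | .and φ ψ, ν => Sat 𝔄 φ ν ∧ Sat 𝔄 ψ ν
  | .or φ ψ, ν => Sat 𝔄 φ ν ∨ Sat 𝔄 ψ ν
  | .all x φ, ν => ∀ a : A, Sat 𝔄 φ (Function.update ν x a)
  | .ex x φ, ν => ∃ a : A, Sat 𝔄 φ (Function.update ν x a)
  | .not φ, ν => ¬ Sat 𝔄 φ ν

end Sat

section ModelDefining

variable {𝒱 : Vocab} {A K : Type} [CommSemiring K]

/-- A `K`-interpretation is model-defining if for each fact exactly one of the values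
assigned to it and to its negation is `0`. -/
def ModelDefining (π : Lit 𝒱 A → K) : Prop :=
  ∀ L : Lit 𝒱 A, (π L = 0 ∧ π L.neg ≠ 0) ∨ (π L ≠ 0 ∧ π L.neg = 0)

/-- The structure `𝔄_π` defined by a model-defining interpretation `π`:
it satisfies a literal `L` iff `π L ≠ 0`. -/
def StrucOf (π : Lit 𝒱 A → K) : Struc 𝒱 A := fun R a => π ⟨true, R, a⟩ ≠ 0

end ModelDefining

/-- A commutative semiring is positive if it is `+`-positive and has no divisors of zero. -/
def IsPositive (K : Type) [CommSemiring K] : Prop :=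
  (∀ a b : K, a + b = 0 → a = 0 ∧ b = 0) ∧ ∀ a b : K, a * b = 0 → a = 0 ∨ b = 0


open MvPolynomial

/-- Generating relation for the dual-indeterminate congruence: `p · p̄ = 0` for `p ∈ X`
(we realize the set of tokens `X ∪ X̄` as the sum type `X ⊕ X`, with `Sum.inl p = p`
and `Sum.inr p = p̄`). -/
def pairRel (X : Type) : MvPolynomial (X ⊕ X) ℕ → MvPolynomial (X ⊕ X) ℕ → Prop :=
  fun a b => b = 0 ∧ ∃ p : X, a = MvPolynomial.X (Sum.inl p) * MvPolynomial.X (Sum.inr p)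

/-- The semiring congruence on `ℕ[X ∪ X̄]` generated by `p · p̄ = 0` for all `p ∈ X`. -/
noncomputable def dualCon (X : Type) : RingCon (MvPolynomial (X ⊕ X) ℕ) := ringConGen (pairRel X)

/-- `ℕ[X,X̄]`: the commutative semiring of dual-indeterminate polynomials, i.e. the
quotient of the polynomial semiring `ℕ[X ∪ X̄]` by the congruence `p · p̄ = 0`. -/
abbrev DualPoly (X : Type) := (dualCon X).Quotient

/-- The image in `ℕ[X,X̄]` of a provenance token `x ∈ X ∪ X̄`. -/
noncomputable def tok {X : Type} (x : X ⊕ X) : DualPoly X :=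
  ((MvPolynomial.X x : MvPolynomial (X ⊕ X) ℕ) : DualPoly X)

open Classical in
/-- Deleting from a polynomial all monomials that contain a pair of complementary tokens. -/
noncomputable def clean {X : Type} (q : MvPolynomial (X ⊕ X) ℕ) : MvPolynomial (X ⊕ X) ℕ :=
  ∑ m ∈ q.support.filter
      (fun m => ¬ ∃ p : X, m (Sum.inl p) ≠ 0 ∧ m (Sum.inr p) ≠ 0),
    MvPolynomial.monomial m (q.coeff m)

/-- A representative polynomial of an element of `ℕ[X,X̄]`. -/
noncomputable def qrep {X : Type} (q : DualPoly X) : MvPolynomial (X ⊕ X) ℕ :=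
  (Quot.exists_rep q).choose

/-- The coefficient of the monomial `m` in a dual-indeterminate polynomial:
the coefficient of `m` in the canonical (clean) representative. -/
noncomputable def coeffQ {X : Type} (q : DualPoly X) (m : (X ⊕ X) →₀ ℕ) : ℕ :=
  (clean (qrep q)).coeff m

/-- The sum of the monomial coefficients of a dual-indeterminate polynomial. -/
noncomputable def sumCoeff {X : Type} (q : DualPoly X) : ℕ :=
  ∑ m ∈ (clean (qrep q)).support, (clean (qrep q)).coeff m


section DualInterp

variable {𝒱 : Vocab} {A X : Type}

/-- A provenance-tracking interpretation: positive facts are annotated with positive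
tokens (or `0`, `1`), negative facts with negative tokens (or `0`, `1`), with the
convention that the complementary token `p̄` may only annotate the negation of the
fact annotated by `p` (and vice versa). -/
def ProvTracking (π : Lit 𝒱 A → DualPoly X) : Prop :=
  (∀ L : Lit 𝒱 A, L.pos = true → π L = 0 ∨ π L = 1 ∨ ∃ p : X, π L = tok (Sum.inl p)) ∧
  (∀ L : Lit 𝒱 A, L.pos = false → π L = 0 ∨ π L = 1 ∨ ∃ p : X, π L = tok (Sum.inr p)) ∧
  (∀ L L' : Lit 𝒱 A, ∀ p : X,
     π L = tok (Sum.inl p) → π L' = tok (Sum.inr p) → L' = L.neg)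

/-- A model-compatible interpretation: each fact is either tracked by a pair of
complementary tokens `z`, `z̄` (a distinct pair for each tracked fact), or is
annotated by `0` and `1` (untracked false fact) or by `1` and `0` (untracked true
fact). -/
def ModelCompatible (π : Lit 𝒱 A → DualPoly X) : Prop :=
  (∀ L : Lit 𝒱 A, L.pos = true →
      (∃ z : X, π L = tok (Sum.inl z) ∧ π L.neg = tok (Sum.inr z)) ∨
      (π L = 0 ∧ π L.neg = 1) ∨ (π L = 1 ∧ π L.neg = 0)) ∧
  (∀ L L' : Lit 𝒱 A, ∀ z : X, π L = tok (Sum.inl z) → π L' = tok (Sum.inl z) → L = L')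

/-- A structure `𝔄` (with the same universe `A`) is compatible with `π` if `𝔄 ⊨ L`
for every literal `L` with `π L = 1`. -/
def Compatible (π : Lit 𝒱 A → DualPoly X) (𝔄 : Struc 𝒱 A) : Prop :=
  ∀ L : Lit 𝒱 A, π L = 1 → 𝔄.SatLit L

open Classical in
/-- The specialization `π↓𝔄` of an interpretation `π` with respect to a structure `𝔄`:
`π↓𝔄(L) = π(L)` if `𝔄 ⊨ L` and `π↓𝔄(L) = 0` otherwise. -/
noncomputable def specialize {K : Type} [CommSemiring K] (π : Lit 𝒱 A → K)
    (𝔄 : Struc 𝒱 A) : Lit 𝒱 A → K :=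
  fun L => if 𝔄.SatLit L then π L else 0

end DualInterp


/-!
Evaluate `ℕ[X,X̄]` at Boolean assignments `s : X → Bool`, sending `p ↦ s p` and `p̄ ↦ ¬ s p`;
this respects `p · p̄ = 0`. Since coefficients in `ℕ` cannot cancel, an element vanishing under
every assignment has only monomials containing some pair `p, p̄`, so it is `0`. For a
model-compatible `π`, composing with the evaluation at `s` gives a model-defining
`ℕ`-interpretation whose structure is compatible with `π`, and every compatible structure arises
this way. As `ℕ` is a positive semiring, `π⟦¬φ⟧` evaluates to a nonzero number at `s` exactly
when that structure falsifies `φ`.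
-/

namespace DualPoly

variable {X : Type}

open MvPolynomial

def boolVal (s : X → Bool) : X ⊕ X → ℕ :=
  Sum.elim (fun p => (s p).toNat) (fun p => (!s p).toNat)

noncomputable def evalBool (s : X → Bool) : DualPoly X →+* ℕ :=
  (dualCon X).lift (eval (boolVal s)) <| RingCon.ringConGen_le.2 fun _ _ ⟨h0, p, hp⟩ => by
    cases hs : s p <;> simp [h0, hp, boolVal, hs]

lemma evalBool_coe (s : X → Bool) (r : MvPolynomial (X ⊕ X) ℕ) :
    evalBool s (r : DualPoly X) = eval (boolVal s) r :=
  rfl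

@[simp]
lemma evalBool_tok_inl (s : X → Bool) (p : X) : evalBool s (tok (.inl p)) = (s p).toNat := by
  simp [tok, evalBool_coe, boolVal]

@[simp]
lemma evalBool_tok_inr (s : X → Bool) (p : X) : evalBool s (tok (.inr p)) = (!s p).toNat := by
  simp [tok, evalBool_coe, boolVal]

lemma coe_monomial_eq_zero {m : (X ⊕ X) →₀ ℕ} {p : X} (hl : m (.inl p) ≠ 0)
    (hr : m (.inr p) ≠ 0) (c : ℕ) : (monomial m c : DualPoly X) = 0 := by
  have hle : Finsupp.single (Sum.inl p) 1 + Finsupp.single (Sum.inr p) 1 ≤ m := by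
    intro i
    rcases i with q | q <;> by_cases hq : p = q <;> subst_vars <;> simp [*] <;> omega
  have hpair : ((MvPolynomial.X (.inl p) * MvPolynomial.X (.inr p) : MvPolynomial (X ⊕ X) ℕ) :
      DualPoly X) = 0 :=
    (RingCon.eq _).2 (RingConGen.Rel.of _ _ ⟨rfl, p, rfl⟩)
  rw [← add_tsub_cancel_of_le hle, add_assoc, monomial_single_add, monomial_single_add, pow_one,
    pow_one, ← mul_assoc, RingCon.coe_mul, hpair, zero_mul]

lemma eq_zero_of_forall_evalBool {q : DualPoly X} (h : ∀ s, evalBool s q = 0) : q = 0 := by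
  classical
  obtain ⟨r, rfl⟩ := (dualCon X).mk'_surjective q
  suffices hdirty : ∀ m ∈ r.support, ∃ p, m (.inl p) ≠ 0 ∧ m (.inr p) ≠ 0 by
    rw [← r.support_sum_monomial_coeff, map_sum]
    refine Finset.sum_eq_zero fun m hm => ?_
    obtain ⟨p, hl, hr⟩ := hdirty m hm
    exact coe_monomial_eq_zero hl hr _
  intro m hm
  by_contra! hclean
  -- the assignment making exactly the tokens of `m` true sends `m` to `1`
  set s : X → Bool := fun p => m (.inl p) ≠ 0
  have hm1 : ∏ i ∈ m.support, boolVal s i ^ m i = 1 :=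
    Finset.prod_eq_one fun i hi => by
      rcases i with p | p
      · simp_all [s, boolVal]
      · have := mt (hclean p) (Finsupp.mem_support_iff.1 hi)
        simp_all [s, boolVal]
  have hr := h s
  rw [RingCon.coe_mk', evalBool_coe, eval_eq, Finset.sum_eq_zero_iff] at hr
  exact mem_support_iff.1 hm (by simpa [hm1] using hr m hm)

end DualPoly

section Positive

variable {K : Type} [CommSemiring K]

theorem IsPositive.add_eq_zero_iff (hK : IsPositive K) {a b : K} : a + b = 0 ↔ a = 0 ∧ b = 0 :=
  ⟨hK.1 a b, fun h => by rw [h.1, h.2, add_zero]⟩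

theorem IsPositive.sum_eq_zero_iff (hK : IsPositive K) {ι : Type} (s : Finset ι) (f : ι → K) :
    ∑ i ∈ s, f i = 0 ↔ ∀ i ∈ s, f i = 0 := by
  classical
  induction s using Finset.induction_on with
  | empty => simp
  | insert i s hi ih =>
    rw [Finset.sum_insert hi, Finset.forall_mem_insert, ← ih]
    exact hK.add_eq_zero_iff

theorem isPositive_nat : IsPositive ℕ :=
  ⟨fun _ _ => Nat.add_eq_zero_iff.1, fun _ _ => Nat.mul_eq_zero.1⟩

end Positive

@[simp]
lemma Lit.neg_neg {𝒱 : Vocab} {A : Type} (L : Lit 𝒱 A) : L.neg.neg = L := by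
  cases L; simp [Lit.neg]

section Semantics

variable {𝒱 : Vocab} {Vars A : Type} [DecidableEq Vars]

theorem sat_nnf_and_sat_nnfNeg (𝔄 : Struc 𝒱 A) (φ : Formula 𝒱 Vars) :
    ∀ ν, (Sat 𝔄 φ.nnf ν ↔ Sat 𝔄 φ ν) ∧ (Sat 𝔄 φ.nnfNeg ν ↔ ¬ Sat 𝔄 φ ν) := by
  induction φ with
  | all x φ ih | ex x φ ih =>
    simp only [Formula.nnf, Formula.nnfNeg, Sat, not_forall, not_exists, ih, implies_true, and_self]
  | _ => simp_all [Formula.nnf, Formula.nnfNeg, Sat, imp_iff_not_or]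

theorem sat_nnfNeg (𝔄 : Struc 𝒱 A) (φ : Formula 𝒱 Vars) (ν : Vars → A) :
    Sat 𝔄 φ.nnfNeg ν ↔ ¬ Sat 𝔄 φ ν :=
  (sat_nnf_and_sat_nnfNeg 𝔄 φ ν).2

variable [Fintype A] [DecidableEq A] {K : Type} [CommSemiring K]

theorem RingHom.map_eval {L : Type} [CommSemiring L] (f : K →+* L) (π : Lit 𝒱 A → K)
    (φ : Formula 𝒱 Vars) (ν : Vars → A) : f (eval π φ ν) = eval (fun L => f (π L)) φ ν := by
  induction φ, ν using eval.induct <;> simp_all [_root_.eval, map_prod, map_sum]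

omit [Fintype A] [DecidableEq A] in
theorem ModelDefining.satLit_strucOf_iff {π : Lit 𝒱 A → K} (hπ : ModelDefining π)
    (L : Lit 𝒱 A) :
    (StrucOf π).SatLit L ↔ π L ≠ 0 := by
  obtain ⟨_ | _, R, a⟩ := L
  · have := hπ ⟨true, R, a⟩
    simp only [Lit.neg] at this
    simp only [Struc.SatLit, StrucOf]
    tauto
  · rfl

theorem ModelDefining.eval_ne_zero_iff_sat (hK : IsPositive K) [Nontrivial K]
    {π : Lit 𝒱 A → K} (hπ : ModelDefining π) (φ : Formula 𝒱 Vars) (ν : Vars → A) :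
    eval π φ ν ≠ 0 ↔ Sat (StrucOf π) φ ν := by
  have : NoZeroDivisors K := ⟨hK.2 _ _⟩
  induction φ, ν using eval.induct with
  | case1 R v ν => rw [_root_.eval, Sat]; exact (hπ.satLit_strucOf_iff ⟨true, R, _⟩).symm
  | case2 R v ν => rw [_root_.eval, Sat]; exact (hπ.satLit_strucOf_iff ⟨false, R, _⟩).symm
  | case7 φ ψ ν ihφ ihψ => simp only [_root_.eval, Sat, mul_ne_zero_iff, ihφ, ihψ]
  | case8 φ ψ ν ihφ ihψ =>
    simp only [_root_.eval, Sat, ← ihφ, ← ihψ, ne_eq, hK.add_eq_zero_iff, not_and_or]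
  | case9 x φ ν ih =>
    simp only [_root_.eval, Sat, Finset.prod_ne_zero_iff, Finset.mem_univ, ih, forall_const]
  | case10 x φ ν ih => simp [_root_.eval, Sat, hK.sum_eq_zero_iff, ← ih]
  | case11 φ ν ih => rw [_root_.eval, Sat, ← sat_nnfNeg]; exact ih
  | _ => simp_all [_root_.eval, Sat]

end Semantics

namespace ModelCompatible

variable {𝒱 : Vocab} {A X : Type} {π : Lit 𝒱 A → DualPoly X}

open DualPoly

theorem modelDefining_evalBool (hπ : ModelCompatible π) (s : X → Bool) :
    ModelDefining fun L => evalBool s (π L) := by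
  have hpos : ∀ L : Lit 𝒱 A, L.pos = true →
      (evalBool s (π L) = 0 ∧ evalBool s (π L.neg) ≠ 0) ∨
        (evalBool s (π L) ≠ 0 ∧ evalBool s (π L.neg) = 0) := by
    intro L hL
    rcases hπ.1 L hL with ⟨z, h, hneg⟩ | ⟨h, hneg⟩ | ⟨h, hneg⟩ <;> simp [h, hneg]
  intro L
  cases hL : L.pos
  · have := hpos L.neg (by simp [Lit.neg, hL])
    rw [Lit.neg_neg] at this
    tauto
  · exact hpos L hL

theorem compatible_strucOf_evalBool (hπ : ModelCompatible π) (s : X → Bool) :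
    Compatible π (StrucOf fun L => evalBool s (π L)) := fun L hL => by
  rw [(hπ.modelDefining_evalBool s).satLit_strucOf_iff, hL, map_one]
  exact one_ne_zero

theorem exists_strucOf_evalBool_eq (hπ : ModelCompatible π) {𝔄 : Struc 𝒱 A}
    (h𝔄 : Compatible π 𝔄) : ∃ s : X → Bool, StrucOf (fun L => evalBool s (π L)) = 𝔄 := by
  classical
  refine ⟨fun z => ∃ L, π L = tok (.inl z) ∧ 𝔄.SatLit L, ?_⟩
  funext R a
  have hsat := h𝔄 ⟨true, R, a⟩
  have hsatNeg := h𝔄 ⟨false, R, a⟩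
  simp only [Struc.SatLit, if_true, Bool.false_eq_true, if_false] at hsat hsatNeg
  rcases hπ.1 ⟨true, R, a⟩ rfl with ⟨z, h, -⟩ | ⟨h, hneg⟩ | ⟨h, -⟩ <;>
    simp only [StrucOf, h, map_zero, map_one, evalBool_tok_inl] at hsatNeg ⊢
  · simp only [ne_eq, Bool.toNat_eq_zero, Bool.not_eq_false, decide_eq_true_eq]
    refine propext ⟨fun ⟨L, hL, hsatL⟩ => ?_, fun ha => ⟨_, h, ha⟩⟩
    rwa [hπ.2 L _ z hL h] at hsatL
  · simpa using hsatNeg hneg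
  · simpa using hsat h

end ModelCompatible

/-- for a model-compatible interpretation `π` and a sentence `φ`,
`φ` is `Mod_π`-valid iff `π⟦¬φ⟧ = 0`. -/
theorem modPi_valid_iff {𝒱 : Vocab} {Vars A X : Type} [DecidableEq Vars]
    [Fintype A] [DecidableEq A] [Nonempty A]
    (π : Lit 𝒱 A → DualPoly X) (hπ : ModelCompatible π)
    (φ : Formula 𝒱 Vars) (hφ : φ.FV = ∅) (ν : Vars → A) :
    (∀ 𝔄 : Struc 𝒱 A, Compatible π 𝔄 → Sat 𝔄 φ ν) ↔
      eval π (Formula.not φ) ν = 0 := by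
  have key : ∀ s, DualPoly.evalBool s (eval π (Formula.not φ) ν) = 0 ↔
      Sat (StrucOf fun L => DualPoly.evalBool s (π L)) φ ν := fun s => by
    rw [RingHom.map_eval, ← not_ne_iff,
      (hπ.modelDefining_evalBool s).eval_ne_zero_iff_sat isPositive_nat, Sat, not_not]
  constructor
  · exact fun h => DualPoly.eq_zero_of_forall_evalBool fun s =>
      (key s).2 (h _ (hπ.compatible_strucOf_evalBool s))
  · intro h 𝔄 h𝔄
    obtain ⟨s, rfl⟩ := hπ.exists_strucOf_evalBool_eq h𝔄
    rw [← key, h, map_zero]
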